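/- arXiv:1602.07013 — 7 statements merged into one kernel-verified Lean document; each statement's English description precedes it below -/
import Mathlib

section
/- Let M : Fin k → Fin l → ℝ be a Monge matrix. Let 0 = p 0 < p 1 < … < p a = k and 0 = q 0 < q 1 < … < q b = l be strictly increasing sequences of natural numbers partitioning the rows into consecutive blocks R s = {i : p s ≤ i < p (s+1)} and the columns into consecutive blocks C t = {j : q t ≤ j < q (t+1)}. Then the block-minima matrix M' : Fin a → Fin b → ℝ defined by M' s t = min { M i j : p s ≤ i < p (s+1), q t ≤ j < q (t+1) } is again a Monge matrix. (Fact 2 of the paper.) -/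
/-! Pick minimizers `(i₁, j₁)` of block `(s₁, t₁)` and `(i₂, j₂)` of block `(s₂, t₂)`. If
`i₁ ≤ i₂` and `j₁ ≤ j₂`, the Monge inequality for these four entries, together with
`M' s₂ t₁ ≤ M i₂ j₁` and `M' s₁ t₂ ≤ M i₁ j₂`, gives the claim. Otherwise, say `i₂ < i₁`: since
the blocks are consecutive intervals, both `i₁` and `i₂` then lie in both row blocks `s₁` and
`s₂`, so `M' s₂ t₁ ≤ M i₁ j₁` and `M' s₁ t₂ ≤ M i₂ j₂` already. -/

/-- A rectangular Monge matrix. -/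
def IsMonge {k l : ℕ} (M : Fin k → Fin l → ℝ) : Prop :=
  ∀ i1 i2 : Fin k, ∀ j1 j2 : Fin l, i1 ≤ i2 → j1 ≤ j2 →
    M i2 j1 + M i1 j2 ≤ M i1 j1 + M i2 j2

open Set

theorem le_or_mem_Ico_swap {α : Type*} [LinearOrder α] {a₁ b₁ a₂ b₂ x₁ x₂ : α}
    (ha : a₁ ≤ a₂) (hb : b₁ ≤ b₂) (h₁ : x₁ ∈ Ico a₁ b₁) (h₂ : x₂ ∈ Ico a₂ b₂) :
    x₁ ≤ x₂ ∨ x₁ ∈ Ico a₂ b₂ ∧ x₂ ∈ Ico a₁ b₁ := by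
  rcases le_or_gt x₁ x₂ with h | h
  · exact Or.inl h
  · exact Or.inr ⟨⟨h₂.1.trans h.le, h₁.2.trans_le hb⟩, ⟨ha.trans h₂.1, h.trans h₁.2⟩⟩

theorem Monotone.le_or_mem_block_swap {n m : ℕ} {p : Fin (n + 1) → ℕ} (hp : Monotone p)
    {s₁ s₂ : Fin n} (hs : s₁ ≤ s₂) {x₁ x₂ : Fin m}
    (h₁ : (x₁ : ℕ) ∈ Ico (p s₁.castSucc) (p s₁.succ))
    (h₂ : (x₂ : ℕ) ∈ Ico (p s₂.castSucc) (p s₂.succ)) :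
    x₁ ≤ x₂ ∨ (x₁ : ℕ) ∈ Ico (p s₂.castSucc) (p s₂.succ) ∧
      (x₂ : ℕ) ∈ Ico (p s₁.castSucc) (p s₁.succ) :=
  le_or_mem_Ico_swap (hp (Fin.castSucc_le_castSucc_iff.mpr hs)) (hp (Fin.succ_le_succ_iff.mpr hs))
    h₁ h₂

theorem IsMonge.blockMin {k l a b : ℕ} {M : Fin k → Fin l → ℝ} (hM : IsMonge M)
    {R : Fin a → Set (Fin k)} {C : Fin b → Set (Fin l)}
    (hR : ∀ s₁ s₂, s₁ ≤ s₂ → ∀ i₁ ∈ R s₁, ∀ i₂ ∈ R s₂, i₁ ≤ i₂ ∨ i₁ ∈ R s₂ ∧ i₂ ∈ R s₁)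
    (hC : ∀ t₁ t₂, t₁ ≤ t₂ → ∀ j₁ ∈ C t₁, ∀ j₂ ∈ C t₂, j₁ ≤ j₂ ∨ j₁ ∈ C t₂ ∧ j₂ ∈ C t₁)
    {M' : Fin a → Fin b → ℝ} (hlb : ∀ s t, ∀ i ∈ R s, ∀ j ∈ C t, M' s t ≤ M i j)
    (hattain : ∀ s t, ∃ i ∈ R s, ∃ j ∈ C t, M' s t = M i j) :
    IsMonge M' := by
  intro s₁ s₂ t₁ t₂ hs ht
  obtain ⟨i₁, hi₁, j₁, hj₁, h₁₁⟩ := hattain s₁ t₁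
  obtain ⟨i₂, hi₂, j₂, hj₂, h₂₂⟩ := hattain s₂ t₂
  rw [h₁₁, h₂₂]
  rcases hR s₁ s₂ hs i₁ hi₁ i₂ hi₂ with hi | ⟨hi₁₂, hi₂₁⟩
  · rcases hC t₁ t₂ ht j₁ hj₁ j₂ hj₂ with hj | ⟨hj₁₂, hj₂₁⟩
    · linarith [hM i₁ i₂ j₁ j₂ hi hj, hlb s₂ t₁ i₂ hi₂ j₁ hj₁, hlb s₁ t₂ i₁ hi₁ j₂ hj₂]
    · linarith [hlb s₂ t₁ i₂ hi₂ j₂ hj₂₁, hlb s₁ t₂ i₁ hi₁ j₁ hj₁₂]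
  · linarith [hlb s₂ t₁ i₁ hi₁₂ j₁ hj₁, hlb s₁ t₂ i₂ hi₂₁ j₂ hj₂]

theorem block_min_isMonge_general {k l a b : ℕ} (M : Fin k → Fin l → ℝ)
    (hM : IsMonge M)
    (p : Fin (a + 1) → ℕ) (q : Fin (b + 1) → ℕ)
    (hp : StrictMono p) (hq : StrictMono q)
    (M' : Fin a → Fin b → ℝ)
    (hlb : ∀ (s : Fin a) (t : Fin b) (i : Fin k) (j : Fin l),
      p s.castSucc ≤ (i : ℕ) → (i : ℕ) < p s.succ →
      q t.castSucc ≤ (j : ℕ) → (j : ℕ) < q t.succ →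
      M' s t ≤ M i j)
    (hattain : ∀ (s : Fin a) (t : Fin b), ∃ (i : Fin k) (j : Fin l),
      p s.castSucc ≤ (i : ℕ) ∧ (i : ℕ) < p s.succ ∧
      q t.castSucc ≤ (j : ℕ) ∧ (j : ℕ) < q t.succ ∧
      M' s t = M i j) :
    IsMonge M' := by
  refine hM.blockMin (R := fun s ↦ {i | (i : ℕ) ∈ Ico (p s.castSucc) (p s.succ)})
    (C := fun t ↦ {j | (j : ℕ) ∈ Ico (q t.castSucc) (q t.succ)})
    (fun _ _ hs _ hi₁ _ hi₂ ↦ hp.monotone.le_or_mem_block_swap hs hi₁ hi₂)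
    (fun _ _ ht _ hj₁ _ hj₂ ↦ hq.monotone.le_or_mem_block_swap ht hj₁ hj₂)
    (fun s t i hi j hj ↦ hlb s t i j hi.1 hi.2 hj.1 hj.2) fun s t ↦ ?_
  obtain ⟨i, j, hi₁, hi₂, hj₁, hj₂, h⟩ := hattain s t
  exact ⟨i, ⟨hi₁, hi₂⟩, j, ⟨hj₁, hj₂⟩, h⟩

/-- Fact 2: partition the rows of a Monge matrix into consecutive blocks
`[p s, p (s+1))` and the columns into consecutive blocks `[q t, q (t+1))`.
Then the matrix of block minima is again a Monge matrix.
Here `M' s t = min { M i j : p s ≤ i < p (s+1), q t ≤ j < q (t+1) }` is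
characterized by being a lower bound on the block entries that is attained. -/
theorem block_min_isMonge {k l a b : ℕ} (M : Fin k → Fin l → ℝ)
    (hM : IsMonge M)
    (p : Fin (a + 1) → ℕ) (q : Fin (b + 1) → ℕ)
    (hp : StrictMono p) (hq : StrictMono q)
    (hp0 : p 0 = 0) (hpa : p (Fin.last a) = k)
    (hq0 : q 0 = 0) (hqb : q (Fin.last b) = l)
    (M' : Fin a → Fin b → ℝ)
    (hlb : ∀ (s : Fin a) (t : Fin b) (i : Fin k) (j : Fin l),
      p s.castSucc ≤ (i : ℕ) → (i : ℕ) < p s.succ →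
      q t.castSucc ≤ (j : ℕ) → (j : ℕ) < q t.succ →
      M' s t ≤ M i j)
    (hattain : ∀ (s : Fin a) (t : Fin b), ∃ (i : Fin k) (j : Fin l),
      p s.castSucc ≤ (i : ℕ) ∧ (i : ℕ) < p s.succ ∧
      q t.castSucc ≤ (j : ℕ) ∧ (j : ℕ) < q t.succ ∧
      M' s t = M i j) :
    IsMonge M' :=
  block_min_isMonge_general M hM p q hp hq M' hlb hattain
end

section
/- Let M : Fin k → Fin l → ℝ be a Monge matrix and suppose row r attains the column minimum of column c, i.e. M r c = min over all rows i of M i c. Then: (1) for every column c' ≤ c there exists a row r' ≥ r such that M r' c' = min over all rows i of M i c'; and (2) for every column c' ≥ c there exists a row r' ≤ r such that M r' c' = min over all rows i of M i c'. (Fact 3 of the paper: column minima of columns to the left can be found weakly below, and of columns to the right weakly above.) -/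
/-- Row `r` attains the column minimum of column `c`. -/
def ColMinAt {k l : ℕ} (M : Fin k → Fin l → ℝ) (r : Fin k) (c : Fin l) : Prop :=
  ∀ i : Fin k, M r c ≤ M i c

/- The Monge inequality on rows `i ≤ r` and columns `c' ≤ c` bounds the gap `M i c' - M r c'`
from below by the gap `M i c - M r c ≥ 0`, so every row above `r` is dominated by `r` in
column `c'`. Hence a minimiser of column `c'` among the rows `≥ r` is a column minimum
outright; the case `c ≤ c'` is symmetric. -/

section

variable {k l : ℕ} {M : Fin k → Fin l → ℝ}

theorem IsMonge.le_of_colMinAt_of_le_of_le (hM : IsMonge M) {r : Fin k} {c : Fin l}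
    (hr : ColMinAt M r c) {i : Fin k} {c' : Fin l} (hi : i ≤ r) (hc' : c' ≤ c) :
    M r c' ≤ M i c' := by
  linarith [hM i r c' c hi hc', hr i]

theorem IsMonge.le_of_colMinAt_of_ge_of_ge (hM : IsMonge M) {r : Fin k} {c : Fin l}
    (hr : ColMinAt M r c) {i : Fin k} {c' : Fin l} (hi : r ≤ i) (hc' : c ≤ c') :
    M r c' ≤ M i c' := by
  linarith [hM r i c c' hi hc', hr i]

theorem exists_mem_colMinAt_of_dominates (M : Fin k → Fin l → ℝ) (c : Fin l)
    {s : Finset (Fin k)} {r : Fin k} (hr : r ∈ s) (hdom : ∀ i ∉ s, M r c ≤ M i c) :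
    ∃ r' ∈ s, ColMinAt M r' c := by
  obtain ⟨r', hr's, hr'min⟩ := s.exists_min_image (fun i => M i c) ⟨r, hr⟩
  refine ⟨r', hr's, fun i => ?_⟩
  by_cases hi : i ∈ s
  · exact hr'min i hi
  · exact (hr'min r hr).trans (hdom i hi)

end

/-- Fact 3: if row `r` attains the column minimum of column `c`, then every
column to the left of `c` has a column minimum weakly below `r`, and every
column to the right of `c` has a column minimum weakly above `r`. -/
theorem monge_colMin_monotone {k l : ℕ} (M : Fin k → Fin l → ℝ)
    (hM : IsMonge M) (r : Fin k) (c : Fin l) (hr : ColMinAt M r c) :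
    (∀ c' : Fin l, c' ≤ c → ∃ r' : Fin k, r ≤ r' ∧ ColMinAt M r' c') ∧
    (∀ c' : Fin l, c ≤ c' → ∃ r' : Fin k, r' ≤ r ∧ ColMinAt M r' c') := by
  constructor
  · intro c' hc'
    obtain ⟨r', hr', hmin⟩ := exists_mem_colMinAt_of_dominates M c' (Finset.mem_Ici.2 le_rfl)
      fun i hi => hM.le_of_colMinAt_of_le_of_le hr
        (le_of_not_ge (mt Finset.mem_Ici.2 hi)) hc'
    exact ⟨r', Finset.mem_Ici.1 hr', hmin⟩
  · intro c' hc'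
    obtain ⟨r', hr', hmin⟩ := exists_mem_colMinAt_of_dominates M c' (Finset.mem_Iic.2 le_rfl)
      fun i hi => hM.le_of_colMinAt_of_ge_of_ge hr
        (le_of_not_ge (mt Finset.mem_Iic.2 hi)) hc'
    exact ⟨r', Finset.mem_Iic.1 hr', hmin⟩
end

section
/- Let M : Fin k → Fin l → ℝ be a Monge matrix. If a row r attains the column minimum of column j1 and also attains the column minimum of column j2, where j1 ≤ j2, then r attains the column minimum of every column j with j1 ≤ j ≤ j2. Consequently, the set of columns whose minimum is attained in row r is a (possibly empty) contiguous interval of columns. (Fact 4 of the paper.) -/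
namespace IsMonge

variable {k l : ℕ} {M : Fin k → Fin l → ℝ} {r i : Fin k} {j j' : Fin l}

theorem apply_le_above_left (hM : IsMonge M) (h : ColMinAt M r j') (hir : i ≤ r)
    (hjj' : j ≤ j') : M r j ≤ M i j :=
  calc M r j ≤ M i j + (M r j' - M i j') := by linarith [hM i r j j' hir hjj']
    _ ≤ M i j := by linarith [h i]

theorem apply_le_below_right (hM : IsMonge M) (h : ColMinAt M r j') (hri : r ≤ i)
    (hj'j : j' ≤ j) : M r j ≤ M i j :=
  calc M r j ≤ M i j + (M r j' - M i j') := by linarith [hM r i j' j hri hj'j]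
    _ ≤ M i j := by linarith [h i]

end IsMonge

theorem monge_colMin_contiguous_general {k l : ℕ} (M : Fin k → Fin l → ℝ)
    (hM : IsMonge M) (r : Fin k) (j1 j2 : Fin l)
    (h1 : ColMinAt M r j1) (h2 : ColMinAt M r j2) :
    ∀ j : Fin l, j1 ≤ j → j ≤ j2 → ColMinAt M r j := by
  intro j hj1 hj2 i
  rcases le_total i r with hir | hri
  · exact hM.apply_le_above_left h2 hir hj2
  · exact hM.apply_le_below_right h1 hri hj1

/-- Fact 4: the set of columns whose minimum is attained in a given row `r`
is contiguous: if `r` attains the column minima of columns `j1 ≤ j2`, then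
it attains the column minimum of every column in between. -/
theorem monge_colMin_contiguous {k l : ℕ} (M : Fin k → Fin l → ℝ)
    (hM : IsMonge M) (r : Fin k) (j1 j2 : Fin l) (h12 : j1 ≤ j2)
    (h1 : ColMinAt M r j1) (h2 : ColMinAt M r j2) :
    ∀ j : Fin l, j1 ≤ j → j ≤ j2 → ColMinAt M r j :=
  monge_colMin_contiguous_general M hM r j1 j2 h1 h2
end

section
/- Let M : Fin k → Fin l → ℝ be a Monge matrix, let j1 ≤ j ≤ j2 be columns, and let ρ1, ρ2 be rows with ρ2 ≤ ρ1 such that ρ1 attains the column minimum of column j1 and ρ2 attains the column minimum of column j2. Then there exists a row r with ρ2 ≤ r ≤ ρ1 that attains the column minimum of column j. (The 'sandwiching' claim proved and used in Section 4 of the paper to restrict the search for minima of the columns of a block to the rows between the minimizing rows of the two neighboring blocks.) -/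
/-! If a function on a locally finite linear order is minimal at `a` among the points below `a`
and at `b` among the points above `b`, its minimum over `[a, b]` is a global minimum. The Monge
inequality supplies both hypotheses for the column `j`: rows above the minimizer `ρ2` of a later
column cannot beat it in column `j`, nor can rows below the minimizer `ρ1` of an earlier one. -/

theorem exists_mem_Icc_forall_le_of_le_below_of_le_above {α β : Type*} [LinearOrder α]
    [LocallyFiniteOrder α] [LinearOrder β] {f : α → β} {a b : α} (hab : a ≤ b)
    (ha : ∀ i ≤ a, f a ≤ f i) (hb : ∀ i, b ≤ i → f b ≤ f i) :
    ∃ r ∈ Set.Icc a b, ∀ i, f r ≤ f i := by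
  obtain ⟨r, hr, hr_min⟩ :=
    Finset.exists_min_image (Finset.Icc a b) f ⟨a, Finset.mem_Icc.2 ⟨le_rfl, hab⟩⟩
  refine ⟨r, Finset.mem_Icc.1 hr, fun i => ?_⟩
  rcases le_total i a with hia | hai
  · exact (hr_min a (Finset.mem_Icc.2 ⟨le_rfl, hab⟩)).trans (ha i hia)
  rcases le_total b i with hbi | hib
  · exact (hr_min b (Finset.mem_Icc.2 ⟨hab, le_rfl⟩)).trans (hb i hbi)
  exact hr_min i (Finset.mem_Icc.2 ⟨hai, hib⟩)

namespace IsMonge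

variable {k l : ℕ} {M : Fin k → Fin l → ℝ}

theorem le_of_colMinAt_of_le_of_le_s5 (hM : IsMonge M) {ρ i : Fin k} {j j2 : Fin l}
    (hρ : ColMinAt M ρ j2) (hi : i ≤ ρ) (hj : j ≤ j2) : M ρ j ≤ M i j := by
  have := hM i ρ j j2 hi hj
  linarith [hρ i]

theorem le_of_colMinAt_of_ge_of_ge_s5 (hM : IsMonge M) {ρ i : Fin k} {j1 j : Fin l}
    (hρ : ColMinAt M ρ j1) (hi : ρ ≤ i) (hj : j1 ≤ j) : M ρ j ≤ M i j := by
  have := hM ρ i j1 j hi hj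
  linarith [hρ i]

end IsMonge

/-- Sandwiching: if `ρ1` attains the column minimum of `j1`, `ρ2` attains the
column minimum of `j2`, `ρ2 ≤ ρ1` and `j1 ≤ j ≤ j2`, then column `j` has a
column minimum attained in some row between `ρ2` and `ρ1`. -/
theorem monge_sandwich {k l : ℕ} (M : Fin k → Fin l → ℝ) (hM : IsMonge M)
    (j1 j j2 : Fin l) (hj1 : j1 ≤ j) (hj2 : j ≤ j2)
    (ρ1 ρ2 : Fin k) (hρ : ρ2 ≤ ρ1)
    (h1 : ColMinAt M ρ1 j1) (h2 : ColMinAt M ρ2 j2) :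
    ∃ r : Fin k, ρ2 ≤ r ∧ r ≤ ρ1 ∧ ColMinAt M r j := by
  obtain ⟨r, ⟨hr2, hr1⟩, hr⟩ := exists_mem_Icc_forall_le_of_le_below_of_le_above (f := (M · j)) hρ
    (fun _ hi => hM.le_of_colMinAt_of_le_of_le_s5 h2 hi hj2)
    (fun _ hi => hM.le_of_colMinAt_of_ge_of_ge_s5 h1 hi hj1)
  exact ⟨r, hr2, hr1, hr⟩
end

section
/- Let b ≥ 2 and z ≥ 0 be integers and set m = b^z. Then the staircase index set S = {(i, j) : 0 ≤ i ≤ j < m} can be partitioned into a finite family F of pairwise disjoint interval rectangles whose union is S, such that: (1) the family F has at most 2·b^z − 1 members; (2) every row index i ∈ {0, …, m−1} belongs to the row interval of at most z + 1 members of F; and (3) every column index j ∈ {0, …, m−1} belongs to the column interval of at most z·(b − 1) + 1 members of F. (The core recursive construction in the proof of Lemma 6 (l:part) of the paper, with the explicit bounds rowcnt(z) ≤ z+1, colcnt(z) ≤ z(b−1)+1 and rectcnt(z) ≤ 2b^z − 1.) -/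
/-!
The staircase of size `b m` splits into `b` translated copies of the staircase of size `m` along
the diagonal and, above the `k`-th copy for `k < b - 1`, the rectangle
`[k m, (k + 1) m) × [(k + 1) m, b m)`. Iterating this from the single cell of size `1`, each step
puts one new rectangle over every row (the one above its diagonal block) and at most `b - 1` over
every column, and turns `r` rectangles into `b r + b - 1`.
-/

/-- The interval rectangle `{a, …, a'} × {c, …, c'}` described by a pair of
pairs `((a, a'), (c, c'))`, as a finset of `ℕ × ℕ`. -/
def rect (e : (ℕ × ℕ) × (ℕ × ℕ)) : Finset (ℕ × ℕ) :=
  Finset.Icc e.1.1 e.1.2 ×ˢ Finset.Icc e.2.1 e.2.2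

open Finset

lemma mem_rect {e : (ℕ × ℕ) × (ℕ × ℕ)} {x y : ℕ} :
    (x, y) ∈ rect e ↔ x ∈ Icc e.1.1 e.1.2 ∧ y ∈ Icc e.2.1 e.2.2 :=
  mem_product

lemma mem_Icc_add_mul_iff {a a' m k x : ℕ} (ha' : a' < m) :
    x ∈ Icc (a + k * m) (a' + k * m) ↔ x / m = k ∧ x % m ∈ Icc a a' := by
  have hx := Nat.mod_add_div' x m
  have hr := Nat.mod_lt x (show 0 < m by omega)
  simp only [mem_Icc]
  constructor
  · rintro ⟨h1, h2⟩
    have hk : x / m = k := Nat.div_eq_of_lt_le (by omega) (by rw [add_one_mul]; omega)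
    rw [hk] at hx
    exact ⟨hk, by omega, by omega⟩
  · rintro ⟨hk, h1, h2⟩
    rw [hk] at hx
    omega

lemma le_iff_mod_le_mod_of_div_eq {m x y : ℕ} (h : x / m = y / m) : x ≤ y ↔ x % m ≤ y % m := by
  have hx := Nat.mod_add_div' x m
  have hy := Nat.mod_add_div' y m
  rw [h] at hx
  omega

structure IsStaircasePartition (m : ℕ) (F : Finset ((ℕ × ℕ) × (ℕ × ℕ))) : Prop where
  nonempty : ∀ e ∈ F, e.1.1 ≤ e.1.2 ∧ e.2.1 ≤ e.2.2
  pairwiseDisjoint : ∀ e1 ∈ F, ∀ e2 ∈ F, e1 ≠ e2 → Disjoint (rect e1) (rect e2)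
  cover : ∀ i j : ℕ, (i ≤ j ∧ j < m) ↔ ∃ e ∈ F, (i, j) ∈ rect e

namespace IsStaircasePartition

variable {m : ℕ} {F : Finset ((ℕ × ℕ) × (ℕ × ℕ))}

lemma upper_lt (hF : IsStaircasePartition m F) {e : (ℕ × ℕ) × (ℕ × ℕ)} (he : e ∈ F) :
    e.1.2 < m ∧ e.2.2 < m := by
  obtain ⟨h1, h2⟩ := hF.nonempty e he
  have := (hF.cover e.1.2 e.2.2).2 ⟨e, he, mem_rect.2 ⟨right_mem_Icc.2 h1, right_mem_Icc.2 h2⟩⟩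
  omega

lemma eq_of_mem_rect (hF : IsStaircasePartition m F) {e1 e2 : (ℕ × ℕ) × (ℕ × ℕ)}
    (he1 : e1 ∈ F) (he2 : e2 ∈ F) {p : ℕ × ℕ} (h1 : p ∈ rect e1) (h2 : p ∈ rect e2) :
    e1 = e2 := by
  by_contra hne
  exact disjoint_left.1 (hF.pairwiseDisjoint e1 he1 e2 he2 hne) h1 h2

end IsStaircasePartition

def shift (d : ℕ) (e : (ℕ × ℕ) × (ℕ × ℕ)) : (ℕ × ℕ) × (ℕ × ℕ) :=
  ((e.1.1 + d, e.1.2 + d), (e.2.1 + d, e.2.2 + d))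

lemma mem_rect_shift_mul_iff {m k x y : ℕ} {e : (ℕ × ℕ) × (ℕ × ℕ)}
    (he : e.1.2 < m ∧ e.2.2 < m) :
    (x, y) ∈ rect (shift (k * m) e) ↔ x / m = k ∧ y / m = k ∧ (x % m, y % m) ∈ rect e := by
  simp only [mem_rect, shift, mem_Icc_add_mul_iff he.1, mem_Icc_add_mul_iff he.2]
  tauto

def topBlock (b m k : ℕ) : (ℕ × ℕ) × (ℕ × ℕ) :=
  ((k * m, k * m + m - 1), ((k + 1) * m, b * m - 1))

lemma mem_rect_topBlock_iff {b m k x y : ℕ} (hm : 0 < m) :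
    (x, y) ∈ rect (topBlock b m k) ↔ x / m = k ∧ k < y / m ∧ y / m < b := by
  rw [Nat.div_eq_iff hm, Nat.lt_iff_add_one_le, Nat.le_div_iff_mul_le hm,
    Nat.div_lt_iff_lt_mul hm]
  simp only [mem_rect, topBlock, mem_Icc, add_one_mul]
  omega

def topBlocks (b m : ℕ) : Finset ((ℕ × ℕ) × (ℕ × ℕ)) :=
  (range (b - 1)).image (topBlock b m)

def diagonalCopies (b m : ℕ) (F : Finset ((ℕ × ℕ) × (ℕ × ℕ))) : Finset ((ℕ × ℕ) × (ℕ × ℕ)) :=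
  (range b ×ˢ F).image fun p => shift (p.1 * m) p.2

def staircaseStep (b m : ℕ) (F : Finset ((ℕ × ℕ) × (ℕ × ℕ))) : Finset ((ℕ × ℕ) × (ℕ × ℕ)) :=
  topBlocks b m ∪ diagonalCopies b m F

section Step

variable {b m : ℕ} {F : Finset ((ℕ × ℕ) × (ℕ × ℕ))}

lemma mem_staircaseStep {e : (ℕ × ℕ) × (ℕ × ℕ)} :
    e ∈ staircaseStep b m F ↔
      (∃ k < b - 1, topBlock b m k = e) ∨ ∃ k < b, ∃ e' ∈ F, shift (k * m) e' = e := by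
  simp [staircaseStep, topBlocks, diagonalCopies, and_assoc]

theorem IsStaircasePartition.staircaseStep (hm : 0 < m) (hF : IsStaircasePartition m F) :
    IsStaircasePartition (b * m) (staircaseStep b m F) where
  nonempty := by
    intro e he
    rcases mem_staircaseStep.1 he with ⟨k, hk, rfl⟩ | ⟨k, -, e', he', rfl⟩
    · have : (k + 2) * m ≤ b * m := Nat.mul_le_mul_right m (by omega)
      simp only [topBlock, add_mul] at this ⊢
      omega
    · have := hF.nonempty e' he'
      simp only [shift]
      omega
  pairwiseDisjoint := by
    intro e1 he1 e2 he2 hne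
    refine disjoint_left.2 fun ⟨x, y⟩ h1 h2 => hne ?_
    rcases mem_staircaseStep.1 he1 with ⟨k1, -, rfl⟩ | ⟨k1, -, f1, hf1, rfl⟩ <;>
      rcases mem_staircaseStep.1 he2 with ⟨k2, -, rfl⟩ | ⟨k2, -, f2, hf2, rfl⟩
    · rw [← ((mem_rect_topBlock_iff hm).1 h1).1, ← ((mem_rect_topBlock_iff hm).1 h2).1]
    · have := (mem_rect_topBlock_iff hm).1 h1
      have := (mem_rect_shift_mul_iff (hF.upper_lt hf2)).1 h2
      omega
    · have := (mem_rect_shift_mul_iff (hF.upper_lt hf1)).1 h1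
      have := (mem_rect_topBlock_iff hm).1 h2
      omega
    · obtain ⟨rfl, -, h1⟩ := (mem_rect_shift_mul_iff (hF.upper_lt hf1)).1 h1
      obtain ⟨rfl, -, h2⟩ := (mem_rect_shift_mul_iff (hF.upper_lt hf2)).1 h2
      rw [hF.eq_of_mem_rect hf1 hf2 h1 h2]
  cover := by
    intro x y
    constructor
    · rintro ⟨hxy, hy⟩
      have hyb : y / m < b := (Nat.div_lt_iff_lt_mul hm).2 hy
      rcases (Nat.div_le_div_right hxy : x / m ≤ y / m).lt_or_eq with hlt | heq
      · exact ⟨topBlock b m (x / m), mem_staircaseStep.2 (.inl ⟨x / m, by omega, rfl⟩),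
          (mem_rect_topBlock_iff hm).2 ⟨rfl, hlt, hyb⟩⟩
      · obtain ⟨e, he, hmem⟩ :=
          (hF.cover _ _).1 ⟨(le_iff_mod_le_mod_of_div_eq heq).1 hxy, Nat.mod_lt y hm⟩
        exact ⟨shift (x / m * m) e, mem_staircaseStep.2 (.inr ⟨x / m, by omega, e, he, rfl⟩),
          (mem_rect_shift_mul_iff (hF.upper_lt he)).2 ⟨rfl, heq.symm, hmem⟩⟩
    · rintro ⟨e, he, hmem⟩
      rcases mem_staircaseStep.1 he with ⟨k, -, rfl⟩ | ⟨k, hk, f, hf, rfl⟩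
      · obtain ⟨rfl, hlt, hyb⟩ := (mem_rect_topBlock_iff hm).1 hmem
        exact ⟨(Nat.lt_of_div_lt_div hlt).le, (Nat.div_lt_iff_lt_mul hm).1 hyb⟩
      · obtain ⟨rfl, hy, hmod⟩ := (mem_rect_shift_mul_iff (hF.upper_lt hf)).1 hmem
        refine ⟨(le_iff_mod_le_mod_of_div_eq hy.symm).2 ((hF.cover _ _).2 ⟨f, hf, hmod⟩).1,
          (Nat.div_lt_iff_lt_mul hm).1 (hy ▸ hk)⟩

end Step

section Counting

variable {b m : ℕ}

lemma card_topBlocks_le : #(topBlocks b m) ≤ b - 1 :=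
  card_image_le.trans (card_range _).le

lemma card_filter_topBlocks_fst_le (hm : 0 < m) (i : ℕ) :
    #{e ∈ topBlocks b m | e.1.1 ≤ i ∧ i ≤ e.1.2} ≤ 1 := by
  refine card_le_one.2 fun e1 he1 e2 he2 => ?_
  simp only [topBlocks, mem_filter, mem_image] at he1 he2
  obtain ⟨⟨k1, -, rfl⟩, h1⟩ := he1
  obtain ⟨⟨k2, -, rfl⟩, h2⟩ := he2
  simp only [topBlock] at h1 h2
  obtain rfl := (Nat.div_eq_iff hm).2 h1
  obtain rfl := (Nat.div_eq_iff hm).2 h2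
  rfl

lemma card_diagonalCopies_le (F : Finset ((ℕ × ℕ) × (ℕ × ℕ))) :
    #(diagonalCopies b m F) ≤ b * #F :=
  card_image_le.trans (by rw [card_product, card_range])

lemma card_filter_diagonalCopies_le {F : Finset ((ℕ × ℕ) × (ℕ × ℕ))}
    (π : (ℕ × ℕ) × (ℕ × ℕ) → ℕ × ℕ) (hπ : ∀ d e, π (shift d e) = ((π e).1 + d, (π e).2 + d))
    (hF : ∀ e ∈ F, (π e).2 < m) (i : ℕ) :
    #{e ∈ diagonalCopies b m F | (π e).1 ≤ i ∧ i ≤ (π e).2} ≤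
      #{e ∈ F | (π e).1 ≤ i % m ∧ i % m ≤ (π e).2} := by
  calc _ ≤ #(({e ∈ F | (π e).1 ≤ i % m ∧ i % m ≤ (π e).2}).image (shift (i / m * m))) :=
        card_le_card ?_
    _ ≤ _ := card_image_le
  intro e he
  simp only [diagonalCopies, mem_filter, mem_image, mem_product, mem_range] at he ⊢
  obtain ⟨⟨⟨k, f⟩, ⟨-, hf⟩, rfl⟩, hi⟩ := he
  simp only [hπ] at hi
  rw [← mem_Icc, mem_Icc_add_mul_iff (hF f hf), mem_Icc] at hi
  obtain ⟨rfl, hi⟩ := hi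
  exact ⟨f, ⟨hf, hi⟩, rfl⟩

end Counting

def staircaseFamily (b : ℕ) : ℕ → Finset ((ℕ × ℕ) × (ℕ × ℕ))
  | 0 => {((0, 0), (0, 0))}
  | z + 1 => staircaseStep b (b ^ z) (staircaseFamily b z)

section Family

variable {b : ℕ}

lemma isStaircasePartition_one : IsStaircasePartition 1 {((0, 0), (0, 0))} where
  nonempty := by simp
  pairwiseDisjoint := by simp
  cover := by simp [mem_rect]

theorem isStaircasePartition_staircaseFamily (hb : 0 < b) :
    ∀ z, IsStaircasePartition (b ^ z) (staircaseFamily b z)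
  | 0 => isStaircasePartition_one
  | z + 1 => by
    rw [pow_succ']
    exact (isStaircasePartition_staircaseFamily hb z).staircaseStep (pow_pos hb z)

theorem card_staircaseFamily_le (hb : 0 < b) : ∀ z, #(staircaseFamily b z) ≤ 2 * b ^ z - 1
  | 0 => by simp [staircaseFamily]
  | z + 1 => by
    have hm := pow_pos hb z
    calc #(staircaseFamily b (z + 1)) ≤ (b - 1) + b * #(staircaseFamily b z) :=
          (card_union_le _ _).trans (add_le_add card_topBlocks_le (card_diagonalCopies_le _))
      _ ≤ (b - 1) + b * (2 * b ^ z - 1) := by gcongr; exact card_staircaseFamily_le hb z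
      _ = 2 * b ^ (z + 1) - 1 := by
        have h1 : 1 ≤ 2 * b ^ z := by omega
        have h2 : 1 ≤ 2 * (b * b ^ z) := by have := Nat.mul_pos hb hm; omega
        rw [pow_succ']
        zify [Nat.one_le_of_lt hb, h1, h2]
        ring

theorem card_filter_fst_staircaseFamily_le (hb : 0 < b) (z i : ℕ) :
    #{e ∈ staircaseFamily b z | e.1.1 ≤ i ∧ i ≤ e.1.2} ≤ z + 1 := by
  induction z generalizing i with
  | zero => exact (card_filter_le _ _).trans (by simp [staircaseFamily])
  | succ z ih =>
    rw [staircaseFamily, staircaseStep, filter_union]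
    have h_diag := card_filter_diagonalCopies_le (b := b) Prod.fst (fun _ _ => rfl)
      (fun _ he => ((isStaircasePartition_staircaseFamily hb z).upper_lt he).1) i
    exact (card_union_le _ _).trans <| (add_le_add (card_filter_topBlocks_fst_le (pow_pos hb z) i)
      (h_diag.trans (ih _))).trans_eq (add_comm _ _)

theorem card_filter_snd_staircaseFamily_le (hb : 0 < b) (z j : ℕ) :
    #{e ∈ staircaseFamily b z | e.2.1 ≤ j ∧ j ≤ e.2.2} ≤ z * (b - 1) + 1 := by
  induction z generalizing j with
  | zero => exact (card_filter_le _ _).trans (by simp [staircaseFamily])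
  | succ z ih =>
    rw [staircaseFamily, staircaseStep, filter_union]
    have h_diag := card_filter_diagonalCopies_le (b := b) Prod.snd (fun _ _ => rfl)
      (fun _ he => ((isStaircasePartition_staircaseFamily hb z).upper_lt he).2) j
    exact (card_union_le _ _).trans <| (add_le_add ((card_filter_le _ _).trans card_topBlocks_le)
      (h_diag.trans (ih _))).trans_eq (by ring)

end Family

/-- The recursive partition in Lemma 6 (l:part) for `m = b ^ z`: the staircase
set `{(i, j) : i ≤ j < b ^ z}` can be partitioned into at most `2 · b^z − 1`
pairwise disjoint nonempty interval rectangles so that every row belongs to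
at most `z + 1` of them and every column to at most `z·(b − 1) + 1` of them. -/
theorem staircase_partition_pow (b z : ℕ) (hb : 2 ≤ b) :
    ∃ F : Finset ((ℕ × ℕ) × (ℕ × ℕ)),
      (∀ e ∈ F, e.1.1 ≤ e.1.2 ∧ e.2.1 ≤ e.2.2) ∧
      (∀ e1 ∈ F, ∀ e2 ∈ F, e1 ≠ e2 → Disjoint (rect e1) (rect e2)) ∧
      (∀ i j : ℕ, (i ≤ j ∧ j < b ^ z) ↔ ∃ e ∈ F, (i, j) ∈ rect e) ∧
      F.card ≤ 2 * b ^ z - 1 ∧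
      (∀ i < b ^ z,
        (F.filter (fun e => e.1.1 ≤ i ∧ i ≤ e.1.2)).card ≤ z + 1) ∧
      (∀ j < b ^ z,
        (F.filter (fun e => e.2.1 ≤ j ∧ j ≤ e.2.2)).card ≤ z * (b - 1) + 1) := by
  have hb_pos : 0 < b := by omega
  obtain ⟨hne, hdisj, hcov⟩ := isStaircasePartition_staircaseFamily hb_pos z
  exact ⟨staircaseFamily b z, hne, hdisj, hcov, card_staircaseFamily_le hb_pos z,
    fun i _ => card_filter_fst_staircaseFamily_le hb_pos z i,
    fun j _ => card_filter_snd_staircaseFamily_le hb_pos z j⟩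
end

section
/- Let b ≥ 2 and m ≥ 1 be integers and let y be the least natural number with b^y ≥ m. Then the staircase index set S = {(i, j) : 0 ≤ i ≤ j < m} can be partitioned into a finite family F of pairwise disjoint interval rectangles whose union is S, such that: (1) the family F has at most 2·b^y − 1 members; (2) every row index i ∈ {0, …, m−1} belongs to the row interval of at most y + 1 members of F; and (3) every column index j ∈ {0, …, m−1} belongs to the column interval of at most y·(b − 1) + 1 members of F. (Lemma 6 (l:part) of the paper for arbitrary m, obtained by padding m up to a power of b and trimming dummy rows and columns.) -/
/-!
Write indices in base `b`. For `i < j < b ^ y` let `t` be the highest digit position at which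
`i` and `j` differ, so that `i / b ^ (t + 1) = j / b ^ (t + 1) = p` and
`i / b ^ t = p * b + k < j / b ^ t`. The pairs with given `t`, `p`, `k` form the rectangle of
rows `i` with `i / b ^ t = p * b + k` and columns `j` with `j / b ^ (t + 1) = p` and
`j / b ^ t > p * b + k`; together with the diagonal singletons these partition the staircase of
size `b ^ y`. A row lies in one rectangle of each level and a column in at most `b - 1`, and there
are `b ^ y + (b - 1) (1 + b + ⋯ + b ^ (y - 1)) = 2 b ^ y - 1` rectangles. For `m ≤ b ^ y`, cut
every rectangle at column `m - 1` and drop those that vanish.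
-/

theorem Nat.exists_lt_not_and_succ {P : ℕ → Prop} {y : ℕ} (h0 : ¬ P 0) (hy : P y) :
    ∃ t < y, ¬ P t ∧ P (t + 1) := by
  induction y with
  | zero => exact absurd hy h0
  | succ y ih =>
    by_cases hP : P y
    · obtain ⟨t, ht, h⟩ := ih hP
      exact ⟨t, by omega, h⟩
    · exact ⟨y, by omega, hP, hy⟩

theorem Nat.div_pow_eq_div_pow_of_le {b i j t s : ℕ} (h : i / b ^ t = j / b ^ t) (hts : t ≤ s) :
    i / b ^ s = j / b ^ s := by
  obtain ⟨d, rfl⟩ := Nat.exists_eq_add_of_le hts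
  rw [pow_add, ← Nat.div_div_eq_div_mul, ← Nat.div_div_eq_div_mul, h]

theorem Nat.div_pow_succ_eq_of_div_pow_eq {b i t p k : ℕ} (hb : 0 < b)
    (h : i / b ^ t = p * b + k) (hk : k < b) : i / b ^ (t + 1) = p := by
  rw [pow_succ, ← Nat.div_div_eq_div_mul, h, add_comm, Nat.add_mul_div_right _ _ hb,
    Nat.div_eq_of_lt hk, zero_add]

theorem Nat.div_pow_succ_lt_iff {b j t y : ℕ} (hb : 0 < b) (ht : t < y) :
    j / b ^ (t + 1) < b ^ (y - 1 - t) ↔ j < b ^ y := by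
  rw [Nat.div_lt_iff_lt_mul (pow_pos hb _), ← pow_add, show y - 1 - t + (t + 1) = y by omega]

namespace Staircase

theorem mem_rect_iff {e : (ℕ × ℕ) × (ℕ × ℕ)} {i j : ℕ} :
    (i, j) ∈ rect e ↔ (e.1.1 ≤ i ∧ i ≤ e.1.2) ∧ (e.2.1 ≤ j ∧ j ≤ e.2.2) := by
  simp only [rect, Finset.mem_product, Finset.mem_Icc]

structure IsStaircasePartition (m : ℕ) (F : Finset ((ℕ × ℕ) × (ℕ × ℕ))) : Prop where
  nonempty : ∀ e ∈ F, e.1.1 ≤ e.1.2 ∧ e.2.1 ≤ e.2.2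
  disjoint : ∀ e1 ∈ F, ∀ e2 ∈ F, e1 ≠ e2 → Disjoint (rect e1) (rect e2)
  exists_mem_iff : ∀ i j : ℕ, (i ≤ j ∧ j < m) ↔ ∃ e ∈ F, (i, j) ∈ rect e

def rowDegree (F : Finset ((ℕ × ℕ) × (ℕ × ℕ))) (i : ℕ) : ℕ :=
  (F.filter fun e => e.1.1 ≤ i ∧ i ≤ e.1.2).card

def colDegree (F : Finset ((ℕ × ℕ) × (ℕ × ℕ))) (j : ℕ) : ℕ :=
  (F.filter fun e => e.2.1 ≤ j ∧ j ≤ e.2.2).card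

section degrees

variable {F G : Finset ((ℕ × ℕ) × (ℕ × ℕ))} {i j : ℕ}

theorem rowDegree_union_le : rowDegree (F ∪ G) i ≤ rowDegree F i + rowDegree G i := by
  rw [rowDegree, Finset.filter_union]; exact Finset.card_union_le _ _

theorem colDegree_union_le : colDegree (F ∪ G) j ≤ colDegree F j + colDegree G j := by
  rw [colDegree, Finset.filter_union]; exact Finset.card_union_le _ _

theorem rowDegree_biUnion_le (s : Finset ℕ) (H : ℕ → Finset ((ℕ × ℕ) × (ℕ × ℕ))) :
    rowDegree (s.biUnion H) i ≤ ∑ t ∈ s, rowDegree (H t) i := by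
  rw [rowDegree, Finset.filter_biUnion]; exact Finset.card_biUnion_le

theorem colDegree_biUnion_le (s : Finset ℕ) (H : ℕ → Finset ((ℕ × ℕ) × (ℕ × ℕ))) :
    colDegree (s.biUnion H) j ≤ ∑ t ∈ s, colDegree (H t) j := by
  rw [colDegree, Finset.filter_biUnion]; exact Finset.card_biUnion_le

end degrees

def truncRect (m : ℕ) (e : (ℕ × ℕ) × (ℕ × ℕ)) : (ℕ × ℕ) × (ℕ × ℕ) :=
  (e.1, (e.2.1, min e.2.2 (m - 1)))

def truncate (m : ℕ) (F : Finset ((ℕ × ℕ) × (ℕ × ℕ))) :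
    Finset ((ℕ × ℕ) × (ℕ × ℕ)) :=
  (F.filter fun e => e.2.1 < m).image (truncRect m)

section truncate

variable {m n : ℕ} {F : Finset ((ℕ × ℕ) × (ℕ × ℕ))}

theorem mem_rect_truncRect {e : (ℕ × ℕ) × (ℕ × ℕ)} {i j : ℕ} :
    (i, j) ∈ rect (truncRect m e) ↔ (i, j) ∈ rect e ∧ j ≤ m - 1 := by
  simp only [mem_rect_iff, truncRect, le_min_iff, and_assoc]

theorem mem_truncate {e : (ℕ × ℕ) × (ℕ × ℕ)} :
    e ∈ truncate m F ↔ ∃ e' ∈ F, e'.2.1 < m ∧ truncRect m e' = e := by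
  simp only [truncate, Finset.mem_image, Finset.mem_filter, and_assoc]

theorem IsStaircasePartition.truncate (hF : IsStaircasePartition n F) (hmn : m ≤ n) :
    IsStaircasePartition m (truncate m F) where
  nonempty e he := by
    obtain ⟨e, heF, hem, rfl⟩ := mem_truncate.mp he
    obtain ⟨hrow, hcol⟩ := hF.nonempty e heF
    exact ⟨hrow, le_min hcol (Nat.le_sub_one_of_lt hem)⟩
  disjoint e1 he1 e2 he2 hne := by
    obtain ⟨e1, he1F, -, rfl⟩ := mem_truncate.mp he1
    obtain ⟨e2, he2F, -, rfl⟩ := mem_truncate.mp he2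
    refine (hF.disjoint e1 he1F e2 he2F fun h => hne (h ▸ rfl)).mono ?_ ?_ <;>
      exact fun x hx => (mem_rect_truncRect (i := x.1) (j := x.2)).mp hx |>.1
  exists_mem_iff i j := by
    constructor
    · rintro ⟨hij, hjm⟩
      obtain ⟨e, he, hije⟩ := (hF.exists_mem_iff i j).mp ⟨hij, by omega⟩
      have hcol := (mem_rect_iff.mp hije).2.1
      exact ⟨truncRect m e, mem_truncate.mpr ⟨e, he, by omega, rfl⟩,
        mem_rect_truncRect.mpr ⟨hije, by omega⟩⟩
    · rintro ⟨_, he, hije⟩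
      obtain ⟨e, heF, hem, rfl⟩ := mem_truncate.mp he
      obtain ⟨hije, hjm⟩ := mem_rect_truncRect.mp hije
      have hcol := (mem_rect_iff.mp hije).2.1
      exact ⟨((hF.exists_mem_iff i j).mpr ⟨e, heF, hije⟩).1, by omega⟩

theorem card_truncate_le : (truncate m F).card ≤ F.card :=
  Finset.card_image_le.trans (Finset.card_filter_le _ _)

theorem rowDegree_truncate_le (i : ℕ) : rowDegree (truncate m F) i ≤ rowDegree F i := by
  rw [rowDegree, truncate, Finset.filter_image]
  exact Finset.card_image_le.trans
    (Finset.card_le_card (Finset.monotone_filter_left _ (Finset.filter_subset _ _)))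

theorem colDegree_truncate_le (j : ℕ) : colDegree (truncate m F) j ≤ colDegree F j := by
  rw [colDegree, truncate, Finset.filter_image]
  refine Finset.card_image_le.trans (Finset.card_le_card fun e he => ?_)
  simp only [Finset.mem_filter, truncRect, le_min_iff] at he ⊢
  exact ⟨he.1.1, he.2.1, he.2.2.1⟩

end truncate

def diagRect (a : ℕ) : (ℕ × ℕ) × (ℕ × ℕ) := ((a, a), (a, a))

theorem mem_rect_diagRect {a i j : ℕ} : (i, j) ∈ rect (diagRect a) ↔ i = a ∧ j = a := by
  rw [mem_rect_iff]; simp only [diagRect]; omega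

/-- The rows of the `k`-th sub-block of size `b ^ t` inside the `p`-th block of size `b ^ (t + 1)`,
against the columns of that block lying in its later sub-blocks. -/
def offRect (b t p k : ℕ) : (ℕ × ℕ) × (ℕ × ℕ) :=
  (((p * b + k) * b ^ t, (p * b + k) * b ^ t + b ^ t - 1),
   ((p * b + k + 1) * b ^ t, p * b ^ (t + 1) + b ^ (t + 1) - 1))

section offRect

variable {b t p k i j : ℕ}

theorem offRect_rows_iff (hb : 0 < b) :
    ((offRect b t p k).1.1 ≤ i ∧ i ≤ (offRect b t p k).1.2) ↔ i / b ^ t = p * b + k :=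
  (Nat.div_eq_iff (pow_pos hb t)).symm

theorem offRect_cols_iff (hb : 0 < b) :
    ((offRect b t p k).2.1 ≤ j ∧ j ≤ (offRect b t p k).2.2) ↔
      p * b + k < j / b ^ t ∧ j / b ^ (t + 1) = p := by
  have hblock : p * b ^ (t + 1) ≤ (p * b + k + 1) * b ^ t := by
    rw [pow_succ]; nlinarith [Nat.zero_le ((k + 1) * b ^ t)]
  rw [Nat.div_eq_iff (pow_pos hb _), Nat.lt_iff_add_one_le, Nat.le_div_iff_mul_le (pow_pos hb _)]
  simp only [offRect]
  omega

theorem mem_rect_offRect (hb : 0 < b) :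
    (i, j) ∈ rect (offRect b t p k) ↔
      i / b ^ t = p * b + k ∧ p * b + k < j / b ^ t ∧ j / b ^ (t + 1) = p := by
  rw [mem_rect_iff, offRect_rows_iff hb, offRect_cols_iff hb]

theorem offRect_nonempty (hb : 0 < b) (hk : k + 1 < b) :
    (offRect b t p k).1.1 ≤ (offRect b t p k).1.2 ∧
      (offRect b t p k).2.1 ≤ (offRect b t p k).2.2 := by
  have hbt := pow_pos hb t
  have hcols : (p * b + k + 1) * b ^ t + b ^ t ≤ p * b ^ (t + 1) + b ^ (t + 1) := by
    rw [pow_succ]; nlinarith [Nat.zero_le ((k + 1) * b ^ t)]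
  simp only [offRect]
  omega

theorem lt_of_mem_rect_offRect (hb : 0 < b) (h : (i, j) ∈ rect (offRect b t p k)) : i < j := by
  obtain ⟨hi, hij, -⟩ := (mem_rect_offRect hb).mp h
  exact Nat.lt_of_div_lt_div (hi ▸ hij)

theorem offRect_level_le {t' p' k' : ℕ} (hb : 0 < b) (hk : k < b)
    (h : (i, j) ∈ rect (offRect b t p k)) (h' : (i, j) ∈ rect (offRect b t' p' k')) :
    t' ≤ t := by
  by_contra! htt'
  obtain ⟨hi, -, hj⟩ := (mem_rect_offRect hb).mp h
  obtain ⟨hi', hij', -⟩ := (mem_rect_offRect hb).mp h'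
  have hsame : i / b ^ t' = j / b ^ t' := Nat.div_pow_eq_div_pow_of_le
    ((Nat.div_pow_succ_eq_of_div_pow_eq hb hi hk).trans hj.symm) htt'
  omega

theorem offRect_eq_of_mem_rect {t' p' k' : ℕ} (hb : 0 < b) (hk : k < b) (hk' : k' < b)
    (h : (i, j) ∈ rect (offRect b t p k)) (h' : (i, j) ∈ rect (offRect b t' p' k')) :
    offRect b t p k = offRect b t' p' k' := by
  obtain rfl : t = t' := le_antisymm (offRect_level_le hb hk' h' h) (offRect_level_le hb hk h h')
  obtain ⟨hi, -, rfl⟩ := (mem_rect_offRect hb).mp h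
  obtain ⟨hi', -, rfl⟩ := (mem_rect_offRect hb).mp h'
  obtain rfl : k = k' := by omega
  rfl

end offRect

def diagRects (n : ℕ) : Finset ((ℕ × ℕ) × (ℕ × ℕ)) := (Finset.range n).image diagRect

def levelRects (b y t : ℕ) : Finset ((ℕ × ℕ) × (ℕ × ℕ)) :=
  (Finset.range (b ^ (y - 1 - t)) ×ˢ Finset.range (b - 1)).image fun pk => offRect b t pk.1 pk.2

def powRects (b y : ℕ) : Finset ((ℕ × ℕ) × (ℕ × ℕ)) :=
  diagRects (b ^ y) ∪ (Finset.range y).biUnion (levelRects b y)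

theorem mem_powRects {b y : ℕ} {e : (ℕ × ℕ) × (ℕ × ℕ)} :
    e ∈ powRects b y ↔ (∃ a < b ^ y, e = diagRect a) ∨
      ∃ t < y, ∃ p < b ^ (y - 1 - t), ∃ k < b - 1, e = offRect b t p k := by
  simp [powRects, diagRects, levelRects, eq_comm, and_assoc]

section powRects

variable {b y : ℕ}

theorem nonempty_of_mem_powRects (hb : 0 < b) {e : (ℕ × ℕ) × (ℕ × ℕ)}
    (he : e ∈ powRects b y) :
    e.1.1 ≤ e.1.2 ∧ e.2.1 ≤ e.2.2 := by
  rcases mem_powRects.mp he with ⟨a, -, rfl⟩ | ⟨t, -, p, -, k, hk, rfl⟩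
  · exact ⟨le_rfl, le_rfl⟩
  · exact offRect_nonempty hb (by omega)

theorem le_and_lt_pow_of_mem_powRects (hb : 0 < b) {e : (ℕ × ℕ) × (ℕ × ℕ)}
    (he : e ∈ powRects b y) {i j : ℕ} (h : (i, j) ∈ rect e) : i ≤ j ∧ j < b ^ y := by
  rcases mem_powRects.mp he with ⟨a, ha, rfl⟩ | ⟨t, ht, p, hp, k, -, rfl⟩
  · rw [mem_rect_diagRect] at h
    omega
  · refine ⟨(lt_of_mem_rect_offRect hb h).le, ?_⟩
    obtain ⟨-, -, rfl⟩ := (mem_rect_offRect hb).mp h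
    exact (Nat.div_pow_succ_lt_iff hb ht).mp hp

theorem eq_of_mem_powRects_of_mem_rect (hb : 0 < b) {e e' : (ℕ × ℕ) × (ℕ × ℕ)}
    (he : e ∈ powRects b y) (he' : e' ∈ powRects b y) {i j : ℕ}
    (h : (i, j) ∈ rect e) (h' : (i, j) ∈ rect e') : e = e' := by
  rcases mem_powRects.mp he with ⟨a, -, rfl⟩ | ⟨t, -, p, -, k, hk, rfl⟩ <;>
    rcases mem_powRects.mp he' with ⟨a', -, rfl⟩ | ⟨t', -, p', -, k', hk', rfl⟩
  · rw [mem_rect_diagRect] at h h'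
    rw [← h.1, ← h'.1]
  · rw [mem_rect_diagRect] at h
    have := lt_of_mem_rect_offRect hb h'
    omega
  · rw [mem_rect_diagRect] at h'
    have := lt_of_mem_rect_offRect hb h
    omega
  · exact offRect_eq_of_mem_rect hb (by omega) (by omega) h h'

theorem exists_mem_rect_of_lt (hb : 0 < b) {i j : ℕ} (hij : i < j) (hj : j < b ^ y) :
    ∃ e ∈ powRects b y, (i, j) ∈ rect e := by
  obtain ⟨t, ht, hne, heq⟩ := Nat.exists_lt_not_and_succ (P := fun s => i / b ^ s = j / b ^ s)
    (y := y) (by simpa using hij.ne) (by rw [Nat.div_eq_of_lt (hij.trans hj), Nat.div_eq_of_lt hj])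
  have hlt : i / b ^ t < j / b ^ t := lt_of_le_of_ne (Nat.div_le_div_right hij.le) hne
  have hi : i / b ^ t = i / b ^ (t + 1) * b + i / b ^ t % b := by
    rw [pow_succ, ← Nat.div_div_eq_div_mul]; exact (Nat.div_add_mod' _ _).symm
  have hj' : j / b ^ t / b = i / b ^ (t + 1) := by rw [Nat.div_div_eq_div_mul, ← pow_succ, heq]
  have hk : i / b ^ t % b < b - 1 := by
    have := (Nat.div_eq_iff hb).mp hj'
    omega
  refine ⟨offRect b t _ _, mem_powRects.mpr (Or.inr ⟨t, ht, _, ?_, _, hk, rfl⟩),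
    (mem_rect_offRect hb).mpr ⟨hi, hi ▸ hlt, heq.symm⟩⟩
  exact heq ▸ (Nat.div_pow_succ_lt_iff hb ht).mpr hj

theorem isStaircasePartition_powRects (hb : 0 < b) (y : ℕ) :
    IsStaircasePartition (b ^ y) (powRects b y) where
  nonempty _ he := nonempty_of_mem_powRects hb he
  disjoint e he e' he' hne := Finset.disjoint_left.mpr fun {x} h h' =>
    hne (eq_of_mem_powRects_of_mem_rect hb he he' (i := x.1) (j := x.2) h h')
  exists_mem_iff i j := by
    refine ⟨fun ⟨hij, hj⟩ => ?_,
      fun ⟨e, he, h⟩ => le_and_lt_pow_of_mem_powRects hb he h⟩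
    rcases hij.eq_or_lt with rfl | hij
    · exact ⟨diagRect i,
        Finset.mem_union_left _ (Finset.mem_image_of_mem _ (Finset.mem_range.mpr hj)),
        mem_rect_diagRect.mpr ⟨rfl, rfl⟩⟩
    · exact exists_mem_rect_of_lt hb hij hj

end powRects

section counting

variable {b y : ℕ}

theorem card_levelRects_le (t : ℕ) : (levelRects b y t).card ≤ b ^ (y - 1 - t) * (b - 1) :=
  Finset.card_image_le.trans_eq (by simp)

theorem card_powRects_le (hb : 0 < b) (y : ℕ) : (powRects b y).card ≤ 2 * b ^ y - 1 := by
  obtain ⟨c, rfl⟩ : ∃ c, b = c + 1 := ⟨b - 1, by omega⟩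
  have hgeom : ∑ t ∈ Finset.range y, (c + 1) ^ (y - 1 - t) * c + 1 = (c + 1) ^ y := by
    rw [Finset.sum_range_reflect (fun t => (c + 1) ^ t * c), ← Finset.sum_mul, geom_sum_mul_add]
  have hdiag : (diagRects ((c + 1) ^ y)).card ≤ (c + 1) ^ y :=
    Finset.card_image_le.trans_eq (Finset.card_range _)
  have hoff : ((Finset.range y).biUnion (levelRects (c + 1) y)).card ≤
      ∑ t ∈ Finset.range y, (c + 1) ^ (y - 1 - t) * c :=
    Finset.card_biUnion_le.trans (Finset.sum_le_sum fun t _ => card_levelRects_le t)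
  exact (Finset.card_union_le _ _).trans (by omega)

theorem rowDegree_diagRects_le (n i : ℕ) : rowDegree (diagRects n) i ≤ 1 := by
  refine Finset.card_le_one.mpr ?_
  simp only [diagRects, Finset.mem_filter, Finset.mem_image]
  rintro _ ⟨⟨a, -, rfl⟩, ha⟩ _ ⟨⟨a', -, rfl⟩, ha'⟩
  dsimp only [diagRect] at ha ha'
  obtain rfl : a = a' := by omega
  rfl

theorem colDegree_diagRects_le (n j : ℕ) : colDegree (diagRects n) j ≤ 1 := by
  refine Finset.card_le_one.mpr ?_
  simp only [diagRects, Finset.mem_filter, Finset.mem_image]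
  rintro _ ⟨⟨a, -, rfl⟩, ha⟩ _ ⟨⟨a', -, rfl⟩, ha'⟩
  dsimp only [diagRect] at ha ha'
  obtain rfl : a = a' := by omega
  rfl

theorem rowDegree_levelRects_le (hb : 0 < b) (t i : ℕ) :
    rowDegree (levelRects b y t) i ≤ 1 := by
  refine Finset.card_le_one.mpr ?_
  simp only [levelRects, Finset.mem_filter, Finset.mem_image, Finset.mem_product,
    Finset.mem_range, Prod.exists]
  rintro _ ⟨⟨p, k, ⟨-, hk⟩, rfl⟩, hi⟩ _ ⟨⟨p', k', ⟨-, hk'⟩, rfl⟩, hi'⟩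
  rw [offRect_rows_iff hb] at hi hi'
  obtain rfl : p = p' := (Nat.div_pow_succ_eq_of_div_pow_eq hb hi (by omega)).symm.trans
    (Nat.div_pow_succ_eq_of_div_pow_eq hb hi' (by omega))
  obtain rfl : k = k' := by omega
  rfl

theorem colDegree_levelRects_le (hb : 0 < b) (t j : ℕ) :
    colDegree (levelRects b y t) j ≤ b - 1 := by
  have hsub : (levelRects b y t).filter (fun e => e.2.1 ≤ j ∧ j ≤ e.2.2) ⊆
      (Finset.range (b - 1)).image (offRect b t (j / b ^ (t + 1))) := by
    simp only [Finset.subset_iff, levelRects, Finset.mem_filter, Finset.mem_image,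
      Finset.mem_product, Finset.mem_range, Prod.exists]
    rintro _ ⟨⟨p, k, ⟨-, hk⟩, rfl⟩, hj⟩
    obtain ⟨-, rfl⟩ := (offRect_cols_iff hb).mp hj
    exact ⟨k, hk, rfl⟩
  exact (Finset.card_le_card hsub).trans (Finset.card_image_le.trans_eq (Finset.card_range _))

theorem rowDegree_powRects_le (hb : 0 < b) (y i : ℕ) : rowDegree (powRects b y) i ≤ y + 1 := by
  have hoff : rowDegree ((Finset.range y).biUnion (levelRects b y)) i ≤ y :=
    (rowDegree_biUnion_le _ _).trans <| (Finset.sum_le_sum fun t _ =>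
      rowDegree_levelRects_le hb t i).trans_eq (by simp)
  have := rowDegree_diagRects_le (b ^ y) i
  exact rowDegree_union_le.trans (by omega)

theorem colDegree_powRects_le (hb : 0 < b) (y j : ℕ) :
    colDegree (powRects b y) j ≤ y * (b - 1) + 1 := by
  have hoff : colDegree ((Finset.range y).biUnion (levelRects b y)) j ≤ y * (b - 1) :=
    (colDegree_biUnion_le _ _).trans <| (Finset.sum_le_sum fun t _ =>
      colDegree_levelRects_le hb t j).trans_eq (by simp)
  have := colDegree_diagRects_le (b ^ y) j
  exact colDegree_union_le.trans (by omega)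

end counting

end Staircase

open Staircase in
theorem staircase_partition_general (b m y : ℕ) (hb : 2 ≤ b) (hy : m ≤ b ^ y) :
    ∃ F : Finset ((ℕ × ℕ) × (ℕ × ℕ)),
      (∀ e ∈ F, e.1.1 ≤ e.1.2 ∧ e.2.1 ≤ e.2.2) ∧
      (∀ e1 ∈ F, ∀ e2 ∈ F, e1 ≠ e2 → Disjoint (rect e1) (rect e2)) ∧
      (∀ i j : ℕ, (i ≤ j ∧ j < m) ↔ ∃ e ∈ F, (i, j) ∈ rect e) ∧
      F.card ≤ 2 * b ^ y - 1 ∧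
      (∀ i < m,
        (F.filter (fun e => e.1.1 ≤ i ∧ i ≤ e.1.2)).card ≤ y + 1) ∧
      (∀ j < m,
        (F.filter (fun e => e.2.1 ≤ j ∧ j ≤ e.2.2)).card ≤ y * (b - 1) + 1) := by
  have hb0 : 0 < b := by omega
  have hF := (isStaircasePartition_powRects hb0 y).truncate hy
  exact ⟨truncate m (powRects b y), hF.nonempty, hF.disjoint, hF.exists_mem_iff,
    card_truncate_le.trans (card_powRects_le hb0 y),
    fun i _ => (rowDegree_truncate_le i).trans (rowDegree_powRects_le hb0 y i),
    fun j _ => (colDegree_truncate_le j).trans (colDegree_powRects_le hb0 y j)⟩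

/-- Lemma 6 (l:part) for arbitrary `m`: with `y` the least natural number such
that `b ^ y ≥ m`, the staircase set `{(i, j) : i ≤ j < m}` can be partitioned
into at most `2 · b^y − 1` pairwise disjoint nonempty interval rectangles so
that every row belongs to at most `y + 1` of them and every column to at most
`y·(b − 1) + 1` of them. -/
theorem staircase_partition (b m y : ℕ) (hb : 2 ≤ b) (hm : 1 ≤ m)
    (hy : m ≤ b ^ y) (hyleast : ∀ y' : ℕ, m ≤ b ^ y' → y ≤ y') :
    ∃ F : Finset ((ℕ × ℕ) × (ℕ × ℕ)),
      (∀ e ∈ F, e.1.1 ≤ e.1.2 ∧ e.2.1 ≤ e.2.2) ∧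
      (∀ e1 ∈ F, ∀ e2 ∈ F, e1 ≠ e2 → Disjoint (rect e1) (rect e2)) ∧
      (∀ i j : ℕ, (i ≤ j ∧ j < m) ↔ ∃ e ∈ F, (i, j) ∈ rect e) ∧
      F.card ≤ 2 * b ^ y - 1 ∧
      (∀ i < m,
        (F.filter (fun e => e.1.1 ≤ i ∧ i ≤ e.1.2)).card ≤ y + 1) ∧
      (∀ j < m,
        (F.filter (fun e => e.2.1 ≤ j ∧ j ≤ e.2.2)).card ≤ y * (b - 1) + 1) :=
  staircase_partition_general b m y hb hy
end

section
/- Let M : Fin k → Fin l → ℝ be a Monge matrix, let S be a finite set of rows, let r be a row, and let c⁻ ≤ c⁺ be columns. Suppose that M r c⁻ ≤ M r' c⁻ for every r' ∈ S and M r c⁺ ≤ M r' c⁺ for every r' ∈ S. Then for every column c with c⁻ ≤ c ≤ c⁺ and every r' ∈ S it holds that M r c ≤ M r' c. In other words, if row r is at least as good as every row of S at the two border columns of an interval of columns, then r is at least as good as every row of S at every column of that interval. (The correctness claim for detecting category C.1 column groups in the Activate-Row procedure of Section 3 of the paper.) -/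
theorem IsMonge.antitone_sub {k l : ℕ} {M : Fin k → Fin l → ℝ} (hM : IsMonge M)
    {i i' : Fin k} (hi : i ≤ i') : Antitone fun j => M i j - M i' j := by
  intro j j' hj
  linarith [hM i i' j j' hi hj]

theorem monge_border_domination_general {k l : ℕ} (M : Fin k → Fin l → ℝ)
    (hM : IsMonge M) (S : Finset (Fin k)) (r : Fin k)
    (cm cp : Fin l)
    (hleft : ∀ r' ∈ S, M r cm ≤ M r' cm)
    (hright : ∀ r' ∈ S, M r cp ≤ M r' cp) :
    ∀ c : Fin l, cm ≤ c → c ≤ cp → ∀ r' ∈ S, M r c ≤ M r' c := by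
  intro c hcm hcp r' hr'
  rcases le_total r r' with hrr' | hr'r
  · have hsub : M r c - M r' c ≤ M r cm - M r' cm := hM.antitone_sub hrr' hcm
    linarith [hleft r' hr']
  · have hsub : M r' cp - M r cp ≤ M r' c - M r c := hM.antitone_sub hr'r hcp
    linarith [hright r' hr']

/-- If row `r` is at least as good as every row of `S` at the two border
columns `c⁻ ≤ c⁺`, then `r` is at least as good as every row of `S` at every
column of the interval `[c⁻, c⁺]`. -/
theorem monge_border_domination {k l : ℕ} (M : Fin k → Fin l → ℝ)
    (hM : IsMonge M) (S : Finset (Fin k)) (r : Fin k)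
    (cm cp : Fin l) (hc : cm ≤ cp)
    (hleft : ∀ r' ∈ S, M r cm ≤ M r' cm)
    (hright : ∀ r' ∈ S, M r cp ≤ M r' cp) :
    ∀ c : Fin l, cm ≤ c → c ≤ cp → ∀ r' ∈ S, M r c ≤ M r' c :=
  monge_border_domination_general M hM S r cm cp hleft hright
end
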